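/- arXiv:1606.07788 — 2 statements merged into one kernel-verified Lean document; each statement's English description precedes it below -/
import Mathlib

section
/- The tropical X-mutation is an involution: on ℚ^I define, for fixed k, the map sending (x_i) to (x'_i) where x'_k = -x_k and x'_i = x_i + ε_{ki}·max(0, sgn(ε_{ki})·x_k) for i ≠ k. If ε' is obtained from ε by matrix mutation in direction k, then the tropical X-mutation in direction k with respect to ε' composed with the tropical X-mutation in direction k with respect to ε is the identity on ℚ^I. -/
/-- Matrix mutation in direction `k`. -/
def mutate {I : Type*} [DecidableEq I] (ε : I → I → ℤ) (k : I) : I → I → ℤ :=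
  fun i j =>
    if i = k ∨ j = k then -ε i j
    else ε i j + (|ε i k| * ε k j + ε i k * |ε k j|) / 2

/-- Tropical X-mutation in direction `k`. -/
def tropXMut {I : Type*} [DecidableEq I] (ε : I → I → ℤ) (k : I) (x : I → ℚ) : I → ℚ :=
  fun i =>
    if i = k then -x k
    else x i + (ε k i : ℚ) * max 0 ((Int.sign (ε k i) : ℚ) * x k)

/-- The tropical X-mutation is an involution. -/
theorem tropXMut_involutive {I : Type*} [DecidableEq I] (ε : I → I → ℤ)
    (hskew : ∀ i j, ε i j = -ε j i) (k : I) :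
    ∀ x : I → ℚ, tropXMut (mutate ε k) k (tropXMut ε k x) = x := by
  intro x
  funext i
  by_cases hi : i = k
  · simp [tropXMut, hi]
  · have h1 : mutate ε k k i = -ε k i := if_pos (Or.inl rfl)
    have h2 : tropXMut ε k x k = -x k := if_pos rfl
    have h3 : tropXMut ε k x i = x i + (ε k i : ℚ) * max 0 ((Int.sign (ε k i) : ℚ) * x k) :=
      if_neg hi
    have h4 : tropXMut (mutate ε k) k (tropXMut ε k x) i
        = tropXMut ε k x i + ((mutate ε k k i : ℤ) : ℚ) *
          max 0 ((Int.sign (mutate ε k k i) : ℚ) * tropXMut ε k x k) := if_neg hi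
    rw [h4, h1, h2, h3]
    simp only [Int.sign_neg, Int.cast_neg, neg_mul, neg_neg]
    ring
end

section
/- The Poisson bracket {X_i, X_j} = ε_{ij}·X_i·X_j is preserved under cluster X-mutation: if X'_i are defined from X_i by the cluster X-mutation in direction k (X'_k = X_k^{-1}, X'_i = X_i(1+X_k^{-sgn(ε_{ik})})^{-ε_{ik}} for i ≠ k), and ε' is the mutated matrix, then {X'_i, X'_j} = ε'_{ij}·X'_i·X'_j, where the bracket of the X'_i is computed from the brackets of the X_i via the Leibniz rule. -/
open scoped BigOperators

/-- The `i`-th mutated cluster X-coordinate, as a function on the torus (ℝ_{>0})^I. -/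
noncomputable def xMutFun {I : Type*} [DecidableEq I] (ε : I → I → ℤ) (k i : I) :
    (I → ℝ) → ℝ :=
  fun x =>
    if i = k then (x k)⁻¹
    else x i * (1 + x k ^ (-(Int.sign (ε i k)))) ^ (-(ε i k))

/-- The Poisson bracket on functions on (ℝ_{>0})^I determined on coordinates by
`{x_i, x_j} = ε_{ij} x_i x_j`, computed via the Leibniz rule. -/
noncomputable def poissonBracket {I : Type*} [Fintype I] [DecidableEq I]
    (ε : I → I → ℤ) (f g : (I → ℝ) → ℝ) (x : I → ℝ) : ℝ :=
  ∑ a, ∑ b, (ε a b : ℝ) * x a * x b *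
    (fderiv ℝ f x (Pi.single a 1)) * (fderiv ℝ g x (Pi.single b 1))

/-!
On the positive orthant the bracket is log-canonical: `{f, g} = f g ⟨∇log f, ε ∇log g⟩`, where
`∇log f = (x_a ∂_a f / f)_a`. The logarithmic gradient of `X'_k` is `-e_k`, and that of `X'_i`
(`i ≠ k`) is `e_i + c_i e_k` with `c_i = [ε_ik]_+ - ε_ik x_k / (1 + x_k)`. Pairing these against `ε`,
the `x_k / (1 + x_k)` terms cancel by skew-symmetry, leaving
`ε_ij + ε_ik [ε_jk]_+ - ε_jk [ε_ik]_+ = ε'_ij` (and `-ε_ij` when `i` or `j` is `k`).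
-/

lemma two_dvd_abs_mul_add_mul_abs (a b : ℤ) : 2 ∣ |a| * b + a * |b| := by
  rw [← even_iff_two_dvd]
  simp only [Int.even_add, Int.even_mul, even_abs]

/-- `p ∂_p log (1 + p^{-sgn e})^{-e}`, rewritten so that its `p`-dependent part is linear in `e`. -/
noncomputable def mutCoeff (e : ℤ) (p : ℝ) : ℝ :=
  ((e : ℝ) + |(e : ℝ)|) / 2 - e * (p / (1 + p))

lemma mul_sign_zpow_div_eq_mutCoeff (e : ℤ) {p : ℝ} (hp : 0 < p) :
    (e * e.sign : ℝ) * (p ^ (-e.sign) / (1 + p ^ (-e.sign))) = mutCoeff e p := by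
  rcases lt_trichotomy e 0 with he | rfl | he
  · rw [Int.sign_eq_neg_one_of_neg he, mutCoeff, abs_of_neg (by exact_mod_cast he)]
    simp only [Int.reduceNeg, neg_neg, zpow_one, Int.cast_neg, Int.cast_one]
    field_simp
    ring
  · simp [mutCoeff]
  · rw [Int.sign_eq_one_of_pos he, mutCoeff, abs_of_pos (by exact_mod_cast he)]
    simp only [zpow_neg_one, Int.cast_one]
    field_simp
    ring

lemma hasDerivAt_mutFactor (e : ℤ) {p : ℝ} (hp : 0 < p) :
    HasDerivAt (fun t : ℝ => (1 + t ^ (-e.sign)) ^ (-e))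
      (mutCoeff e p / p * (1 + p ^ (-e.sign)) ^ (-e)) p := by
  have hq : 0 < 1 + p ^ (-e.sign) := by positivity
  refine ((hasDerivAt_zpow (-e) _ (Or.inl hq.ne')).comp p
    ((hasDerivAt_zpow (-e.sign) p (Or.inl hp.ne')).const_add 1)).congr_deriv ?_
  rw [← mul_sign_zpow_div_eq_mutCoeff e hp, zpow_sub_one₀ hq.ne', zpow_sub_one₀ hp.ne']
  push_cast
  field_simp

open Matrix

section

variable {I : Type*} [DecidableEq I]

lemma xMutFun_self (ε : I → I → ℤ) (k : I) : xMutFun ε k k = fun y => (y k)⁻¹ := by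
  ext; simp [xMutFun]

lemma xMutFun_of_ne (ε : I → I → ℤ) {k i : I} (hik : i ≠ k) :
    xMutFun ε k i = fun y => y i * (1 + y k ^ (-(ε i k).sign)) ^ (-ε i k) := by
  ext; simp [xMutFun, hik]

lemma cast_mutate_of_ne (ε : I → I → ℤ) {k i j : I} (hi : i ≠ k) (hj : j ≠ k) :
    (mutate ε k i j : ℝ) = ε i j + ((|ε i k| * ε k j + ε i k * |ε k j|) / 2 : ℝ) := by
  rw [mutate, if_neg (by tauto), Int.cast_add, Int.cast_div (two_dvd_abs_mul_add_mul_abs _ _)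
    two_ne_zero]
  push_cast
  rfl

variable [Fintype I]

lemma poissonBracket_eq_of_logGrad (ε : I → I → ℤ) {f g : (I → ℝ) → ℝ} {x u v : I → ℝ}
    (hf : ∀ a, x a * fderiv ℝ f x (Pi.single a 1) = f x * u a)
    (hg : ∀ b, x b * fderiv ℝ g x (Pi.single b 1) = g x * v b) :
    poissonBracket ε f g x = u ⬝ᵥ (of fun a b => (ε a b : ℝ)) *ᵥ v * (f x * g x) := by
  simp only [poissonBracket, dotProduct, mulVec, of_apply, Finset.mul_sum, Finset.sum_mul]
  refine Finset.sum_congr rfl fun a _ => Finset.sum_congr rfl fun b _ => ?_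
  linear_combination (ε a b * x b * fderiv ℝ g x (Pi.single b 1)) * hf a +
    (ε a b * f x * u a) * hg b

noncomputable def xMutLogGrad (ε : I → I → ℤ) (k i : I) (x : I → ℝ) : I → ℝ :=
  if i = k then -Pi.single k 1 else Pi.single i 1 + mutCoeff (ε i k) (x k) • Pi.single k 1

lemma mul_fderiv_xMutFun_self (ε : I → I → ℤ) (k : I) {x : I → ℝ} (hx : 0 < x k) (a : I) :
    x a * fderiv ℝ (xMutFun ε k k) x (Pi.single a 1) = xMutFun ε k k x * xMutLogGrad ε k k x a := by
  have h : HasFDerivAt (fun y : I → ℝ => (y k)⁻¹) _ x :=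
    (hasDerivAt_inv hx.ne').comp_hasFDerivAt x (hasFDerivAt_apply (𝕜 := ℝ) k x)
  rw [xMutFun_self, h.fderiv]
  rcases eq_or_ne a k with rfl | hak
  · simp only [neg_smul, _root_.neg_apply, _root_.smul_apply, ContinuousLinearMap.proj_apply,
      Pi.single_eq_same, smul_eq_mul, mul_one, mul_neg, xMutLogGrad, ↓reduceIte, Pi.neg_apply,
      neg_inj]
    field_simp
  · simp [xMutLogGrad, hak]

lemma mul_fderiv_xMutFun_of_ne (ε : I → I → ℤ) {k i : I} (hik : i ≠ k) {x : I → ℝ}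
    (hx : 0 < x k) (a : I) :
    x a * fderiv ℝ (xMutFun ε k i) x (Pi.single a 1) = xMutFun ε k i x * xMutLogGrad ε k i x a := by
  have hφ : HasFDerivAt (fun y : I → ℝ => (1 + y k ^ (-(ε i k).sign)) ^ (-ε i k)) _ x :=
    (hasDerivAt_mutFactor (ε i k) hx).comp_hasFDerivAt (f := fun y : I → ℝ => y k) x
      (hasFDerivAt_apply (𝕜 := ℝ) k x)
  have h : HasFDerivAt (fun y : I → ℝ => y i * (1 + y k ^ (-(ε i k).sign)) ^ (-ε i k)) _ x :=
    (hasFDerivAt_apply (𝕜 := ℝ) i x).mul hφ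
  rw [xMutFun_of_ne ε hik, h.fderiv]
  beta_reduce
  generalize (1 + x k ^ (-(ε i k).sign)) ^ (-ε i k) = φ
  simp only [xMutLogGrad, if_neg hik, _root_.add_apply, _root_.smul_apply,
    ContinuousLinearMap.proj_apply, Pi.add_apply, Pi.smul_apply, smul_eq_mul]
  rcases eq_or_ne a k with rfl | hak
  · simp only [Pi.single_eq_same, Pi.single_eq_of_ne hik, Pi.single_eq_of_ne (Ne.symm hik),
      mul_one, mul_zero, add_zero, zero_add]
    field_simp
  rcases eq_or_ne a i with rfl | hai
  · simp [hak]
  · simp [hak, hai]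

lemma mul_fderiv_xMutFun (ε : I → I → ℤ) (k i : I) {x : I → ℝ} (hx : 0 < x k) (a : I) :
    x a * fderiv ℝ (xMutFun ε k i) x (Pi.single a 1) = xMutFun ε k i x * xMutLogGrad ε k i x a := by
  rcases eq_or_ne i k with rfl | hik
  · exact mul_fderiv_xMutFun_self ε i hx a
  · exact mul_fderiv_xMutFun_of_ne ε hik hx a

lemma dotProduct_mulVec_xMutLogGrad (ε : I → I → ℤ) (hskew : ∀ i j, ε i j = -ε j i)
    (k i j : I) (x : I → ℝ) :
    xMutLogGrad ε k i x ⬝ᵥ (of fun a b => (ε a b : ℝ)) *ᵥ xMutLogGrad ε k j x = mutate ε k i j := by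
  have hkk : ε k k = 0 := by linarith [hskew k k]
  rcases eq_or_ne i k with rfl | hi
  · rcases eq_or_ne j i with rfl | hj
    · simp [xMutLogGrad, mutate, hkk, mulVec_neg]
    · simp [xMutLogGrad, mutate, hj, hkk, dotProduct_add, mulVec_add, mulVec_smul]
  rcases eq_or_ne j k with rfl | hj
  · simp [xMutLogGrad, mutate, hi, hkk, add_dotProduct, smul_dotProduct, mulVec_neg]
  rw [cast_mutate_of_ne ε hi hj]
  simp only [xMutLogGrad, hi, hj, ↓reduceIte, mulVec_add, mulVec_smul, mulVec_single_one,
    dotProduct_add, add_dotProduct, smul_dotProduct, dotProduct_smul, single_one_dotProduct,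
    col_apply, of_apply, smul_eq_mul, hkk, hskew k j, Int.cast_zero, Int.cast_neg, Int.cast_abs,
    abs_neg, mutCoeff]
  ring

end

/-- The Poisson bracket `{X_i,X_j} = ε_{ij} X_i X_j` is preserved by
cluster X-mutation: `{X'_i, X'_j} = ε'_{ij} X'_i X'_j` on the positive orthant. -/
theorem poisson_bracket_preserved {I : Type*} [Fintype I] [DecidableEq I]
    (ε : I → I → ℤ) (hskew : ∀ i j, ε i j = -ε j i) (k : I) (i j : I)
    (x : I → ℝ) (hpos : ∀ a, 0 < x a) :
    poissonBracket ε (xMutFun ε k i) (xMutFun ε k j) x =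
      (mutate ε k i j : ℝ) * xMutFun ε k i x * xMutFun ε k j x := by
  rw [poissonBracket_eq_of_logGrad ε (mul_fderiv_xMutFun ε k i (hpos k))
    (mul_fderiv_xMutFun ε k j (hpos k)), dotProduct_mulVec_xMutLogGrad ε hskew k i j x]
  ring
end
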